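/- Let U ⊆ ℂ be open and f : U → ℂ holomorphic. Define φ : U → ℝ by φ(z) = (1 − |f(z)|²)/(1 + |f(z)|²). Then φ is twice real-differentiable on U and for every z ∈ U one has Δφ(z) = −(8|f′(z)|²/(1 + |f(z)|²)²)·φ(z). In particular, at every point where f′(z) ≠ 0, φ satisfies Δ_g φ = 2φ for the Laplace–Beltrami operator Δ_g = −((1+|f|²)²/(4|f′|²))·Δ of the pullback metric g = f*g_st. -/

import Mathlib

/-- The Euclidean Laplacian `Δ = ∂²/∂x² + ∂²/∂y²` of a real-valued function on `ℂ ≃ ℝ²`,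
computed via iterated real Fréchet derivatives in the directions `1` and `I`. -/
noncomputable def lapR (φ : ℂ → ℝ) (z : ℂ) : ℝ :=
  fderiv ℝ (fun w => fderiv ℝ φ w 1) z 1 +
  fderiv ℝ (fun w => fderiv ℝ φ w Complex.I) z Complex.I

/-!
Write `φ = h ∘ q` with `q = ‖f‖²` and `h t = (1 - t) / (1 + t)`. The chain rule for the Laplacian
gives `Δφ = h''(q) |∇q|² + h'(q) Δq`. For holomorphic `f` one has `|∇q|² = 4 ‖f‖² ‖f'‖²` and
`Δq = 4 ‖f'‖²`, the `f''` terms cancelling because `1² + I² = 0`. With `h' = -2 / (1 + t)²` and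
`h'' = 4 / (1 + t)³` this gives `Δφ = -8 ‖f'‖² (1 - q) / (1 + q)³`.
-/

open Complex Filter Topology

theorem fderiv_fderiv_comp_apply {E : Type*} [NormedAddCommGroup E] [NormedSpace ℝ E]
    {q : E → ℝ} {h : ℝ → ℝ} {z : E} (hq : ContDiffAt ℝ 2 q z) (hh : ContDiffAt ℝ 2 h (q z))
    (v : E) :
    fderiv ℝ (fun w => fderiv ℝ (h ∘ q) w v) z v =
      deriv (deriv h) (q z) * fderiv ℝ q z v ^ 2 +
        deriv h (q z) * fderiv ℝ (fun w => fderiv ℝ q w v) z v := by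
  have hq_near : ∀ᶠ w in 𝓝 z, DifferentiableAt ℝ q w :=
    (hq.eventually (by simp)).mono fun w hw => hw.differentiableAt (by simp)
  have hh_near : ∀ᶠ w in 𝓝 z, DifferentiableAt ℝ h (q w) :=
    hq.continuousAt.eventually <|
      (hh.eventually (by simp)).mono fun t ht => ht.differentiableAt (by simp)
  have hchain : (fun w => fderiv ℝ (h ∘ q) w v) =ᶠ[𝓝 z]
      (fun w => deriv h (q w)) * fun w => fderiv ℝ q w v := by
    filter_upwards [hq_near, hh_near] with w hqw hhw
    simp [(hhw.hasDerivAt.comp_hasFDerivAt w hqw.hasFDerivAt).fderiv]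
  have hdh : HasFDerivAt (fun w => deriv h (q w)) (deriv (deriv h) (q z) • fderiv ℝ q z) z :=
    ((hh.derivWithin (m := 1) le_rfl).differentiableAt one_ne_zero).hasDerivAt.comp_hasFDerivAt z
      (hq.differentiableAt (by simp)).hasFDerivAt
  have hdq : DifferentiableAt ℝ (fun w => fderiv ℝ q w v) z :=
    ((hq.fderiv_right (m := 1) le_rfl).differentiableAt one_ne_zero).clm_apply
      (differentiableAt_const v)
  rw [hchain.fderiv_eq, (hdh.mul hdq.hasFDerivAt).fderiv]
  simp only [add_apply, smul_apply, smul_eq_mul]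
  ring

theorem lapR_comp {q : ℂ → ℝ} {h : ℝ → ℝ} {z : ℂ} (hq : ContDiffAt ℝ 2 q z)
    (hh : ContDiffAt ℝ 2 h (q z)) :
    lapR (h ∘ q) z =
      deriv (deriv h) (q z) * (fderiv ℝ q z 1 ^ 2 + fderiv ℝ q z I ^ 2) +
        deriv h (q z) * lapR q z := by
  simp only [lapR, fderiv_fderiv_comp_apply hq hh]
  ring

theorem hasDerivAt_one_sub_div_one_add {t : ℝ} (ht : 1 + t ≠ 0) :
    HasDerivAt (fun s : ℝ => (1 - s) / (1 + s)) (-2 / (1 + t) ^ 2) t := by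
  refine (((hasDerivAt_id t).const_sub 1).fun_div ((hasDerivAt_id t).const_add 1) ht).congr_deriv ?_
  simp only [id]
  ring

theorem deriv_deriv_one_sub_div_one_add {t : ℝ} (ht : 1 + t ≠ 0) :
    deriv (deriv fun s : ℝ => (1 - s) / (1 + s)) t = 4 / (1 + t) ^ 3 := by
  have hderiv : deriv (fun s : ℝ => (1 - s) / (1 + s)) =ᶠ[𝓝 t] fun s => -2 / (1 + s) ^ 2 := by
    filter_upwards [eventually_ne_nhds (a := t) (b := -1) (by contrapose! ht; linarith)]
      with s hs
    exact (hasDerivAt_one_sub_div_one_add (by contrapose! hs; linarith)).deriv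
  rw [hderiv.deriv_eq]
  convert ((((hasDerivAt_id t).const_add 1).pow 2).inv (pow_ne_zero 2 ht)).const_mul (-2)
    |>.deriv using 1
  · simp [div_eq_mul_inv]
  · simp only [Pi.pow_apply, id]
    field_simp
    ring

theorem contDiffAt_one_sub_div_one_add {t : ℝ} (ht : 1 + t ≠ 0) :
    ContDiffAt ℝ 2 (fun s : ℝ => (1 - s) / (1 + s)) t := by
  fun_prop (disch := exact ht)

theorem fderiv_norm_sq_comp_apply {f : ℂ → ℂ} {w : ℂ} (hf : DifferentiableAt ℂ f w) (v : ℂ) :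
    fderiv ℝ (fun z => ‖f z‖ ^ 2) w v = 2 * inner ℝ (f w) (deriv f w * v) := by
  rw [(hf.hasDerivAt.hasFDerivAt.restrictScalars ℝ).norm_sq.fderiv]
  simp only [smul_apply, ContinuousLinearMap.comp_apply, innerSL_apply_apply,
    ContinuousLinearMap.coe_restrictScalars', ContinuousLinearMap.toSpanSingleton_apply,
    smul_eq_mul, nsmul_eq_mul, Nat.cast_ofNat, mul_comm v]

theorem fderiv_fderiv_norm_sq_comp_apply {f : ℂ → ℂ} {z : ℂ} (hf : AnalyticAt ℂ f z) (v : ℂ) :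
    fderiv ℝ (fun w => fderiv ℝ (fun z => ‖f z‖ ^ 2) w v) z v =
      2 * ‖deriv f z * v‖ ^ 2 + 2 * inner ℝ (f z) (deriv (deriv f) z * v ^ 2) := by
  have hnear : (fun w => fderiv ℝ (fun z => ‖f z‖ ^ 2) w v) =ᶠ[𝓝 z]
      fun w => 2 * inner ℝ (f w) (deriv f w * v) := by
    filter_upwards [hf.eventually_analyticAt] with w hw
    exact fderiv_norm_sq_comp_apply hw.differentiableAt v
  have hf' := hf.differentiableAt.hasDerivAt.hasFDerivAt.restrictScalars ℝ
  have hf'' := (hf.deriv.differentiableAt.hasDerivAt.mul_const v).hasFDerivAt.restrictScalars ℝ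
  rw [hnear.fderiv_eq, ((hf'.inner ℝ hf'').const_mul 2).fderiv]
  simp only [smul_apply, ContinuousLinearMap.comp_apply, fderivInnerCLM_apply,
    ContinuousLinearMap.prod_apply, ContinuousLinearMap.coe_restrictScalars',
    ContinuousLinearMap.toSpanSingleton_apply, smul_eq_mul]
  rw [mul_comm v (deriv f z), real_inner_self_eq_norm_sq,
    show v * (deriv (deriv f) z * v) = deriv (deriv f) z * v ^ 2 by ring]
  ring

theorem lapR_norm_sq_comp {f : ℂ → ℂ} {z : ℂ} (hf : AnalyticAt ℂ f z) :
    lapR (fun w => ‖f w‖ ^ 2) z = 4 * ‖deriv f z‖ ^ 2 := by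
  simp only [lapR, fderiv_fderiv_norm_sq_comp_apply hf, one_pow, mul_one, I_sq, mul_neg,
    inner_neg_right, norm_mul, norm_I]
  ring

theorem fderiv_norm_sq_comp_one_sq_add_I_sq {f : ℂ → ℂ} {z : ℂ} (hf : DifferentiableAt ℂ f z) :
    fderiv ℝ (fun w => ‖f w‖ ^ 2) z 1 ^ 2 + fderiv ℝ (fun w => ‖f w‖ ^ 2) z I ^ 2 =
      4 * ‖f z‖ ^ 2 * ‖deriv f z‖ ^ 2 := by
  simp only [fderiv_norm_sq_comp_apply hf, Complex.inner, mul_one]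
  simp only [Complex.sq_norm, normSq_apply, mul_re, mul_im, I_re, I_im, conj_re, conj_im]
  ring

theorem contDiffAt_norm_sq_comp {f : ℂ → ℂ} {z : ℂ} (hf : AnalyticAt ℂ f z) :
    ContDiffAt ℝ 2 (fun w => ‖f w‖ ^ 2) z :=
  (contDiff_norm_sq ℝ).contDiffAt.comp z (hf.contDiffAt.restrict_scalars ℝ)

theorem contDiffAt_one_sub_div_one_add_norm_sq {f : ℂ → ℂ} {z : ℂ} (hf : AnalyticAt ℂ f z) :
    ContDiffAt ℝ 2 (fun w => (1 - ‖f w‖ ^ 2) / (1 + ‖f w‖ ^ 2)) z :=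
  (contDiffAt_one_sub_div_one_add (by positivity)).comp z (contDiffAt_norm_sq_comp hf)

theorem lapR_one_sub_div_one_add_norm_sq {f : ℂ → ℂ} {z : ℂ} (hf : AnalyticAt ℂ f z) :
    lapR (fun w => (1 - ‖f w‖ ^ 2) / (1 + ‖f w‖ ^ 2)) z =
      -(8 * ‖deriv f z‖ ^ 2 / (1 + ‖f z‖ ^ 2) ^ 2) * ((1 - ‖f z‖ ^ 2) / (1 + ‖f z‖ ^ 2)) := by
  have hne : 1 + ‖f z‖ ^ 2 ≠ 0 := by positivity
  have hchain := lapR_comp (contDiffAt_norm_sq_comp hf) (contDiffAt_one_sub_div_one_add hne)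
  simp only [Function.comp_def] at hchain
  rw [hchain, deriv_deriv_one_sub_div_one_add hne, (hasDerivAt_one_sub_div_one_add hne).deriv,
    fderiv_norm_sq_comp_one_sq_add_I_sq hf.differentiableAt, lapR_norm_sq_comp hf]
  field_simp
  ring

theorem stmt_0 (U : Set ℂ) (hU : IsOpen U) (f : ℂ → ℂ)
    (hf : DifferentiableOn ℂ f U) :
    ContDiffOn ℝ 2
      (fun z => (1 - ‖f z‖ ^ 2) / (1 + ‖f z‖ ^ 2)) U ∧
    (∀ z ∈ U,
      lapR (fun z => (1 - ‖f z‖ ^ 2) / (1 + ‖f z‖ ^ 2)) z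
        = -(8 * ‖deriv f z‖ ^ 2 / (1 + ‖f z‖ ^ 2) ^ 2) *
            ((1 - ‖f z‖ ^ 2) / (1 + ‖f z‖ ^ 2))) ∧
    (∀ z ∈ U, deriv f z ≠ 0 →
      -((1 + ‖f z‖ ^ 2) ^ 2 / (4 * ‖deriv f z‖ ^ 2)) *
          lapR (fun z => (1 - ‖f z‖ ^ 2) / (1 + ‖f z‖ ^ 2)) z
        = 2 * ((1 - ‖f z‖ ^ 2) / (1 + ‖f z‖ ^ 2))) := by
  have hfz : ∀ z ∈ U, AnalyticAt ℂ f z := fun z hz => hf.analyticAt (hU.mem_nhds hz)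
  refine ⟨fun z hz => (contDiffAt_one_sub_div_one_add_norm_sq (hfz z hz)).contDiffWithinAt,
    fun z hz => lapR_one_sub_div_one_add_norm_sq (hfz z hz), fun z hz hf'z => ?_⟩
  rw [lapR_one_sub_div_one_add_norm_sq (hfz z hz)]
  field_simp
  ring
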